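/- arXiv:1904.00951 — 6 statements merged into one kernel-verified Lean document; each statement's English description precedes it below -/
import Mathlib

section
/- There is a well-defined monoid homomorphism η̂ : SVB_n → ℤ[VB_n] (the desingularization map) determined by η̂(σ_i^{±1}) = σ_i^{±1}, η̂(ρ_i) = ρ_i, and η̂(τ_i) = σ_i − σ_i^{-1}, where ℤ[VB_n] is the group algebra of the virtual braid group over ℤ. -/
namespace SVBPaper

/-- Generators of the singular virtual braid monoid: `s i` is `σ_i`, `si i` is `σ_i⁻¹`,
`r i` is `ρ_i`, `t i` is `τ_i`, for `1 ≤ i ≤ n-1` (encoded as `i : Fin (n-1)`). -/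
inductive SVBGen (n : ℕ) : Type
  | s  : Fin (n - 1) → SVBGen n
  | si : Fin (n - 1) → SVBGen n
  | r  : Fin (n - 1) → SVBGen n
  | t  : Fin (n - 1) → SVBGen n

/-- The index of a generator. -/
def SVBGen.idx {n : ℕ} : SVBGen n → Fin (n - 1)
  | s i => i
  | si i => i
  | r i => i
  | t i => i

/-- `|i - j| ≥ 2`. -/
def Far {n : ℕ} (i j : Fin (n - 1)) : Prop := (i : ℕ) + 2 ≤ j ∨ (j : ℕ) + 2 ≤ i

/-- The defining relations of the singular virtual braid monoid `SVB_n`. -/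
inductive SVBRel (n : ℕ) : FreeMonoid (SVBGen n) → FreeMonoid (SVBGen n) → Prop
  | comm (x y : SVBGen n) (h : Far x.idx y.idx) :
      SVBRel n (.of x * .of y) (.of y * .of x)
  | inv_right (i : Fin (n - 1)) : SVBRel n (.of (.s i) * .of (.si i)) 1
  | inv_left (i : Fin (n - 1)) : SVBRel n (.of (.si i) * .of (.s i)) 1
  | rho_sq (i : Fin (n - 1)) : SVBRel n (.of (.r i) * .of (.r i)) 1
  | braid_s (i : Fin (n - 1)) (h : (i : ℕ) + 1 < n - 1) :
      SVBRel n (.of (.s i) * .of (.s ⟨i + 1, h⟩) * .of (.s i))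
        (.of (.s ⟨i + 1, h⟩) * .of (.s i) * .of (.s ⟨i + 1, h⟩))
  | braid_r (i : Fin (n - 1)) (h : (i : ℕ) + 1 < n - 1) :
      SVBRel n (.of (.r i) * .of (.r ⟨i + 1, h⟩) * .of (.r i))
        (.of (.r ⟨i + 1, h⟩) * .of (.r i) * .of (.r ⟨i + 1, h⟩))
  | mixed_rs (i : Fin (n - 1)) (h : (i : ℕ) + 1 < n - 1) :
      SVBRel n (.of (.r i) * .of (.s ⟨i + 1, h⟩) * .of (.r i))
        (.of (.r ⟨i + 1, h⟩) * .of (.s i) * .of (.r ⟨i + 1, h⟩))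
  | mixed_rt (i : Fin (n - 1)) (h : (i : ℕ) + 1 < n - 1) :
      SVBRel n (.of (.r i) * .of (.t ⟨i + 1, h⟩) * .of (.r i))
        (.of (.r ⟨i + 1, h⟩) * .of (.t i) * .of (.r ⟨i + 1, h⟩))
  | ts (i : Fin (n - 1)) : SVBRel n (.of (.t i) * .of (.s i)) (.of (.s i) * .of (.t i))
  | sst (i : Fin (n - 1)) (h : (i : ℕ) + 1 < n - 1) :
      SVBRel n (.of (.s i) * .of (.s ⟨i + 1, h⟩) * .of (.t i))
        (.of (.t ⟨i + 1, h⟩) * .of (.s i) * .of (.s ⟨i + 1, h⟩))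

/-- The singular virtual braid monoid on `n` strands. -/
abbrev SVB (n : ℕ) : Type := PresentedMonoid (SVBRel n)

/-- `σ_i` in `SVB_n`. -/
def sσ {n : ℕ} (i : Fin (n - 1)) : SVB n := PresentedMonoid.of (SVBRel n) (.s i)
/-- `σ_i⁻¹` in `SVB_n`. -/
def sσi {n : ℕ} (i : Fin (n - 1)) : SVB n := PresentedMonoid.of (SVBRel n) (.si i)
/-- `ρ_i` in `SVB_n`. -/
def sρ {n : ℕ} (i : Fin (n - 1)) : SVB n := PresentedMonoid.of (SVBRel n) (.r i)
/-- `τ_i` in `SVB_n`. -/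
def sτ {n : ℕ} (i : Fin (n - 1)) : SVB n := PresentedMonoid.of (SVBRel n) (.t i)

/-- The `i`-th strand, as an element of `Fin n`. -/
def stA {n : ℕ} (i : Fin (n - 1)) : Fin n := ⟨i, by have := i.isLt; omega⟩
/-- The `(i+1)`-st strand, as an element of `Fin n`. -/
def stB {n : ℕ} (i : Fin (n - 1)) : Fin n := ⟨(i : ℕ) + 1, by have := i.isLt; omega⟩

/-- The transposition `(i, i+1)` in the symmetric group `S_n`. -/
def swapAdj {n : ℕ} (i : Fin (n - 1)) : Equiv.Perm (Fin n) := Equiv.swap (stA i) (stB i)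


/-- Generators of the virtual braid group: `s i` is `σ_i`, `r i` is `ρ_i`. -/
inductive VBGen (n : ℕ) : Type
  | s : Fin (n - 1) → VBGen n
  | r : Fin (n - 1) → VBGen n

def VBGen.idx {n : ℕ} : VBGen n → Fin (n - 1)
  | s i => i
  | r i => i

/-- The relators of the virtual braid group `VB_n`. -/
inductive VBRel (n : ℕ) : FreeGroup (VBGen n) → Prop
  | comm (x y : VBGen n) (h : Far x.idx y.idx) :
      VBRel n (.of x * .of y * (FreeGroup.of x)⁻¹ * (FreeGroup.of y)⁻¹)
  | rho_sq (i : Fin (n - 1)) : VBRel n (.of (.r i) * .of (.r i))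
  | braid_s (i : Fin (n - 1)) (h : (i : ℕ) + 1 < n - 1) :
      VBRel n (.of (.s i) * .of (.s ⟨i + 1, h⟩) * .of (.s i) *
        (FreeGroup.of (.s ⟨i + 1, h⟩) * FreeGroup.of (.s i) * FreeGroup.of (.s ⟨i + 1, h⟩))⁻¹)
  | braid_r (i : Fin (n - 1)) (h : (i : ℕ) + 1 < n - 1) :
      VBRel n (.of (.r i) * .of (.r ⟨i + 1, h⟩) * .of (.r i) *
        (FreeGroup.of (.r ⟨i + 1, h⟩) * FreeGroup.of (.r i) * FreeGroup.of (.r ⟨i + 1, h⟩))⁻¹)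
  | mixed_rs (i : Fin (n - 1)) (h : (i : ℕ) + 1 < n - 1) :
      VBRel n (.of (.r i) * .of (.s ⟨i + 1, h⟩) * .of (.r i) *
        (FreeGroup.of (.r ⟨i + 1, h⟩) * FreeGroup.of (.s i) * FreeGroup.of (.r ⟨i + 1, h⟩))⁻¹)

/-- The virtual braid group on `n` strands. -/
abbrev VB (n : ℕ) : Type := PresentedGroup {w | VBRel n w}

/-- `σ_i` in `VB_n`. -/
def vσ {n : ℕ} (i : Fin (n - 1)) : VB n := PresentedGroup.of (.s i)
/-- `ρ_i` in `VB_n`. -/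
def vρ {n : ℕ} (i : Fin (n - 1)) : VB n := PresentedGroup.of (.r i)


section Aux

variable {n : ℕ}

/-- Words in the relator set are trivial in `VB n`. -/
lemma vrel_one {w : FreeGroup (VBGen n)} (h : VBRel n w) :
    PresentedGroup.mk {w | VBRel n w} w = 1 :=
  (QuotientGroup.eq_one_iff w).mpr (Subgroup.subset_normalClosure h)

lemma gcomm (x y : VBGen n) (h : Far x.idx y.idx) :
    Commute (PresentedGroup.of x : VB n) (PresentedGroup.of y) := by
  have h1 := vrel_one (VBRel.comm x y h)
  rw [map_mul, map_mul, map_mul, map_inv, map_inv] at h1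
  set a : VB n := PresentedGroup.mk {w | VBRel n w} (FreeGroup.of x) with ha
  set b : VB n := PresentedGroup.mk {w | VBRel n w} (FreeGroup.of y) with hb
  show a * b = b * a
  calc a * b = a * b * a⁻¹ * b⁻¹ * (b * a) := by group
    _ = 1 * (b * a) := by rw [h1]
    _ = b * a := one_mul _

lemma vrho_sq (i : Fin (n - 1)) : (vρ i : VB n) * vρ i = 1 := by
  have h1 := vrel_one (VBRel.rho_sq (n := n) i)
  rwa [map_mul] at h1

lemma vrho_inv (i : Fin (n - 1)) : (vρ i : VB n)⁻¹ = vρ i :=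
  inv_eq_of_mul_eq_one_right (vrho_sq i)

lemma vbraid_s (i : Fin (n - 1)) (h : (i : ℕ) + 1 < n - 1) :
    (vσ i : VB n) * vσ ⟨i + 1, h⟩ * vσ i = vσ ⟨i + 1, h⟩ * vσ i * vσ ⟨i + 1, h⟩ := by
  have h1 := vrel_one (VBRel.braid_s (n := n) i h)
  rw [map_mul, map_inv, map_mul, map_mul, map_mul] at h1
  exact mul_inv_eq_one.mp h1

lemma vbraid_r (i : Fin (n - 1)) (h : (i : ℕ) + 1 < n - 1) :
    (vρ i : VB n) * vρ ⟨i + 1, h⟩ * vρ i = vρ ⟨i + 1, h⟩ * vρ i * vρ ⟨i + 1, h⟩ := by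
  have h1 := vrel_one (VBRel.braid_r (n := n) i h)
  rw [map_mul, map_inv, map_mul, map_mul, map_mul] at h1
  exact mul_inv_eq_one.mp h1

lemma vmixed_rs (i : Fin (n - 1)) (h : (i : ℕ) + 1 < n - 1) :
    (vρ i : VB n) * vσ ⟨i + 1, h⟩ * vρ i = vρ ⟨i + 1, h⟩ * vσ i * vρ ⟨i + 1, h⟩ := by
  have h1 := vrel_one (VBRel.mixed_rs (n := n) i h)
  rw [map_mul, map_inv, map_mul, map_mul, map_mul] at h1
  exact mul_inv_eq_one.mp h1

/-- The inverse-variant of the mixed relation. -/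
lemma vmixed_rs_inv (i : Fin (n - 1)) (h : (i : ℕ) + 1 < n - 1) :
    (vρ i : VB n) * (vσ ⟨i + 1, h⟩)⁻¹ * vρ i = vρ ⟨i + 1, h⟩ * (vσ i)⁻¹ * vρ ⟨i + 1, h⟩ := by
  calc (vρ i : VB n) * (vσ ⟨i + 1, h⟩)⁻¹ * vρ i
      = (vρ i)⁻¹ * (vσ ⟨i + 1, h⟩)⁻¹ * (vρ i)⁻¹ := by rw [vrho_inv]
    _ = ((vρ i : VB n) * vσ ⟨i + 1, h⟩ * vρ i)⁻¹ := by group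
    _ = (vρ ⟨i + 1, h⟩ * vσ i * vρ ⟨i + 1, h⟩)⁻¹ := by rw [vmixed_rs i h]
    _ = (vρ ⟨i + 1, h⟩)⁻¹ * (vσ i)⁻¹ * (vρ ⟨i + 1, h⟩)⁻¹ := by group
    _ = vρ ⟨i + 1, h⟩ * (vσ i)⁻¹ * vρ ⟨i + 1, h⟩ := by rw [vrho_inv]

/-- The conjugation variant of the braid relation. -/
lemma vbraid_conj (i : Fin (n - 1)) (h : (i : ℕ) + 1 < n - 1) :
    (vσ i : VB n) * vσ ⟨i + 1, h⟩ * (vσ i)⁻¹ = (vσ ⟨i + 1, h⟩)⁻¹ * vσ i * vσ ⟨i + 1, h⟩ := by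
  calc (vσ i : VB n) * vσ ⟨i + 1, h⟩ * (vσ i)⁻¹
      = (vσ ⟨i + 1, h⟩)⁻¹ * (vσ ⟨i + 1, h⟩ * vσ i * vσ ⟨i + 1, h⟩) * (vσ i)⁻¹ := by group
    _ = (vσ ⟨i + 1, h⟩)⁻¹ * ((vσ i : VB n) * vσ ⟨i + 1, h⟩ * vσ i) * (vσ i)⁻¹ := by
        rw [vbraid_s i h]
    _ = (vσ ⟨i + 1, h⟩)⁻¹ * vσ i * vσ ⟨i + 1, h⟩ := by group

lemma hcommAux {i j : Fin (n - 1)} (h : Far i j)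
    {a b : VB n} (ha : a = vσ i ∨ a = (vσ i)⁻¹ ∨ a = vρ i)
    (hb : b = vσ j ∨ b = (vσ j)⁻¹ ∨ b = vρ j) : Commute a b := by
  have hss : Commute (vσ i : VB n) (vσ j) := gcomm (.s i) (.s j) h
  have hsr : Commute (vσ i : VB n) (vρ j) := gcomm (.s i) (.r j) h
  have hrs : Commute (vρ i : VB n) (vσ j) := gcomm (.r i) (.s j) h
  have hrr : Commute (vρ i : VB n) (vρ j) := gcomm (.r i) (.r j) h
  rcases ha with rfl | rfl | rfl <;> rcases hb with rfl | rfl | rfl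
  · exact hss
  · exact hss.inv_right
  · exact hsr
  · exact hss.inv_left
  · exact hss.inv_left.inv_right
  · exact hsr.inv_left
  · exact hrs
  · exact hrs.inv_right
  · exact hrr

/-- The image of a generator under the desingularization map. -/
noncomputable def etaGen (n : ℕ) : SVBGen n → MonoidAlgebra ℤ (VB n)
  | .s i => MonoidAlgebra.of ℤ (VB n) (vσ i)
  | .si i => MonoidAlgebra.of ℤ (VB n) ((vσ i)⁻¹)
  | .r i => MonoidAlgebra.of ℤ (VB n) (vρ i)
  | .t i => MonoidAlgebra.of ℤ (VB n) (vσ i) - MonoidAlgebra.of ℤ (VB n) ((vσ i)⁻¹)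

lemma hcommAlg {i j : Fin (n - 1)} (h : Far i j)
    {a b : VB n} (ha : a = vσ i ∨ a = (vσ i)⁻¹ ∨ a = vρ i)
    (hb : b = vσ j ∨ b = (vσ j)⁻¹ ∨ b = vρ j) :
    Commute (MonoidAlgebra.of ℤ (VB n) a) (MonoidAlgebra.of ℤ (VB n) b) :=
  (hcommAux h ha hb).map (MonoidAlgebra.of ℤ (VB n))

lemma etaGen_comm (x y : SVBGen n) (h : Far x.idx y.idx) :
    Commute (etaGen n x) (etaGen n y) := by
  cases x <;> cases y <;> simp only [etaGen, SVBGen.idx] at h ⊢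
  case s.s i j => exact hcommAlg h (.inl rfl) (.inl rfl)
  case s.si i j => exact hcommAlg h (.inl rfl) (.inr (.inl rfl))
  case s.r i j => exact hcommAlg h (.inl rfl) (.inr (.inr rfl))
  case s.t i j =>
    exact (hcommAlg h (.inl rfl) (.inl rfl)).sub_right
      (hcommAlg h (.inl rfl) (.inr (.inl rfl)))
  case si.s i j => exact hcommAlg h (.inr (.inl rfl)) (.inl rfl)
  case si.si i j => exact hcommAlg h (.inr (.inl rfl)) (.inr (.inl rfl))
  case si.r i j => exact hcommAlg h (.inr (.inl rfl)) (.inr (.inr rfl))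
  case si.t i j =>
    exact (hcommAlg h (.inr (.inl rfl)) (.inl rfl)).sub_right
      (hcommAlg h (.inr (.inl rfl)) (.inr (.inl rfl)))
  case r.s i j => exact hcommAlg h (.inr (.inr rfl)) (.inl rfl)
  case r.si i j => exact hcommAlg h (.inr (.inr rfl)) (.inr (.inl rfl))
  case r.r i j => exact hcommAlg h (.inr (.inr rfl)) (.inr (.inr rfl))
  case r.t i j =>
    exact (hcommAlg h (.inr (.inr rfl)) (.inl rfl)).sub_right
      (hcommAlg h (.inr (.inr rfl)) (.inr (.inl rfl)))
  case t.s i j =>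
    exact (hcommAlg h (.inl rfl) (.inl rfl)).sub_left
      (hcommAlg h (.inr (.inl rfl)) (.inl rfl))
  case t.si i j =>
    exact (hcommAlg h (.inl rfl) (.inr (.inl rfl))).sub_left
      (hcommAlg h (.inr (.inl rfl)) (.inr (.inl rfl)))
  case t.r i j =>
    exact (hcommAlg h (.inl rfl) (.inr (.inr rfl))).sub_left
      (hcommAlg h (.inr (.inl rfl)) (.inr (.inr rfl)))
  case t.t i j =>
    exact ((hcommAlg h (.inl rfl) (.inl rfl)).sub_right
        (hcommAlg h (.inl rfl) (.inr (.inl rfl)))).sub_left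
      ((hcommAlg h (.inr (.inl rfl)) (.inl rfl)).sub_right
        (hcommAlg h (.inr (.inl rfl)) (.inr (.inl rfl))))

lemma etaGen_rel : ∀ a b : FreeMonoid (SVBGen n), SVBRel n a b →
    FreeMonoid.lift (etaGen n) a = FreeMonoid.lift (etaGen n) b := by
  intro a b hab
  induction hab with
  | comm x y h =>
    simp only [map_mul, FreeMonoid.lift_eval_of]
    exact (etaGen_comm x y h).eq
  | inv_right i =>
    simp only [map_mul, FreeMonoid.lift_eval_of, etaGen]
    rw [← map_mul, mul_inv_cancel, map_one, map_one]
  | inv_left i =>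
    simp only [map_mul, FreeMonoid.lift_eval_of, etaGen]
    rw [← map_mul, inv_mul_cancel, map_one, map_one]
  | rho_sq i =>
    simp only [map_mul, FreeMonoid.lift_eval_of, etaGen]
    rw [← map_mul, vrho_sq, map_one, map_one]
  | braid_s i h =>
    simp only [map_mul, FreeMonoid.lift_eval_of, etaGen]
    simp only [← map_mul]
    rw [vbraid_s i h]
  | braid_r i h =>
    simp only [map_mul, FreeMonoid.lift_eval_of, etaGen]
    simp only [← map_mul]
    rw [vbraid_r i h]
  | mixed_rs i h =>
    simp only [map_mul, FreeMonoid.lift_eval_of, etaGen]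
    simp only [← map_mul]
    rw [vmixed_rs i h]
  | mixed_rt i h =>
    simp only [map_mul, FreeMonoid.lift_eval_of, etaGen]
    simp only [mul_sub, sub_mul, ← map_mul]
    rw [vmixed_rs i h, vmixed_rs_inv i h]
  | ts i =>
    simp only [map_mul, FreeMonoid.lift_eval_of, etaGen]
    simp only [mul_sub, sub_mul, ← map_mul]
    rw [inv_mul_cancel, mul_inv_cancel]
  | sst i h =>
    simp only [map_mul, FreeMonoid.lift_eval_of, etaGen]
    simp only [mul_sub, sub_mul, ← map_mul]
    rw [vbraid_s i h, vbraid_conj i h]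

end Aux

/-- The desingularization map `η̂ : SVB_n → ℤ[VB_n]`, with
`σ_i^{±1} ↦ σ_i^{±1}`, `ρ_i ↦ ρ_i` and `τ_i ↦ σ_i - σ_i⁻¹`, is a well-defined monoid
homomorphism into (the multiplicative monoid of) the group algebra of `VB_n`. -/
theorem etaHat_exists (n : ℕ) (hn : 2 ≤ n) :
    ∃ η : SVB n →* MonoidAlgebra ℤ (VB n), ∀ i : Fin (n - 1),
      η (sσ i) = MonoidAlgebra.of ℤ (VB n) (vσ i) ∧
      η (sσi i) = MonoidAlgebra.of ℤ (VB n) ((vσ i)⁻¹) ∧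
      η (sρ i) = MonoidAlgebra.of ℤ (VB n) (vρ i) ∧
      η (sτ i) = MonoidAlgebra.of ℤ (VB n) (vσ i) -
        MonoidAlgebra.of ℤ (VB n) ((vσ i)⁻¹) := by
  exact ⟨PresentedMonoid.lift (etaGen n) etaGen_rel, fun i => ⟨rfl, rfl, rfl, rfl⟩⟩

end SVBPaper
end

section
/- Let β ∈ SVB_n have exactly d singularities and degree s. Then η̂(β) in ℤ[VB_n] can be written as a sum Σ_{i=1}^{2^d} a_i α_i with a_i ∈ ℤ and α_i ∈ VB_n, such that there are unique indices k, l with deg(α_k) = s − d and deg(α_l) = s + d, and for every other index i one has s − d < deg(α_i) < s + d. -/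
namespace SVBPaper

/-!
η̂ is multiplicative and sends each `τ_i` to `σ_i - σ_i⁻¹`, whose two terms have degrees one
above and one below `deg τ_i = 0`. Expanding the product over the `2 ^ d` ways `ε` of choosing a
term at each singular crossing writes `η̂(β)` as a signed sum whose `ε`-term has degree
`s + #{σ chosen} - #{σ⁻¹ chosen}`. This equals `s - d` or `s + d` only for the two constant
choices and lies strictly in between for all others.
-/

section StateExpansion

def boolSign (b : Bool) : ℤ := if b then 1 else -1

def stateSign {m : ℕ} (ε : Fin m → Bool) : ℤ := ∏ j, boolSign (ε j)

def stateWeight {m : ℕ} (ε : Fin m → Bool) : ℤ := ∑ j, boolSign (ε j)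

variable {m m' : ℕ}

lemma stateSign_append (ε : Fin m → Bool) (ε' : Fin m' → Bool) :
    stateSign (Fin.append ε ε') = stateSign ε * stateSign ε' := by
  simp [stateSign, Fin.prod_univ_add]

lemma stateWeight_append (ε : Fin m → Bool) (ε' : Fin m' → Bool) :
    stateWeight (Fin.append ε ε') = stateWeight ε + stateWeight ε' := by
  simp [stateWeight, Fin.sum_univ_add]

lemma stateWeight_const_false : stateWeight (fun _ : Fin m => false) = -m := by
  simp [stateWeight, boolSign]

lemma stateWeight_const_true : stateWeight (fun _ : Fin m => true) = m := by
  simp [stateWeight, boolSign]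

lemma neg_lt_stateWeight {ε : Fin m → Bool} (h : ε ≠ fun _ => false) :
    -(m : ℤ) < stateWeight ε := by
  obtain ⟨j, hj⟩ := Function.ne_iff.1 h
  calc -(m : ℤ) = ∑ _j : Fin m, (-1 : ℤ) := by simp
    _ < stateWeight ε :=
      Finset.sum_lt_sum (fun i _ => by cases ε i <;> simp [boolSign])
        ⟨j, Finset.mem_univ j, by simp_all [boolSign]⟩

lemma stateWeight_lt {ε : Fin m → Bool} (h : ε ≠ fun _ => true) :
    stateWeight ε < m := by
  obtain ⟨j, hj⟩ := Function.ne_iff.1 h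
  calc stateWeight ε < ∑ _j : Fin m, (1 : ℤ) :=
      Finset.sum_lt_sum (fun i _ => by cases ε i <;> simp [boolSign])
        ⟨j, Finset.mem_univ j, by simp_all [boolSign]⟩
    _ = m := by simp

variable {G : Type*} [Monoid G]

def HasStateExpansion (deg : G →* Multiplicative ℤ) (f : MonoidAlgebra ℤ G) (m : ℕ) (t : ℤ) :
    Prop :=
  ∃ α : (Fin m → Bool) → G, f = ∑ ε, stateSign ε • MonoidAlgebra.of ℤ G (α ε) ∧
    ∀ ε, deg (α ε) = Multiplicative.ofAdd (t + stateWeight ε)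

namespace HasStateExpansion

variable {deg : G →* Multiplicative ℤ}

lemma of (g : G) :
    HasStateExpansion deg (MonoidAlgebra.of ℤ G g) 0 (Multiplicative.toAdd (deg g)) :=
  ⟨fun _ => g, by simp [stateSign], fun _ => by simp [stateWeight]⟩

lemma of_sub_of {x y : G} {c : ℤ} (hx : deg x = Multiplicative.ofAdd (c + 1))
    (hy : deg y = Multiplicative.ofAdd (c - 1)) :
    HasStateExpansion deg (MonoidAlgebra.of ℤ G x - MonoidAlgebra.of ℤ G y) 1 c := by
  refine ⟨fun ε => if ε 0 then x else y, ?_, fun ε => ?_⟩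
  · rw [← (Equiv.funUnique (Fin 1) Bool).symm.sum_comp, Fintype.sum_bool]
    simp [stateSign, boolSign, sub_eq_add_neg]
  · cases h : ε 0 <;> simp [stateWeight, boolSign, h, hx, hy, sub_eq_add_neg]

lemma mul {f f' : MonoidAlgebra ℤ G} {t t' : ℤ} (hf : HasStateExpansion deg f m t)
    (hf' : HasStateExpansion deg f' m' t') :
    HasStateExpansion deg (f * f') (m + m') (t + t') := by
  obtain ⟨α, rfl, hα⟩ := hf
  obtain ⟨α', rfl, hα'⟩ := hf'
  refine ⟨fun ε => α ((Fin.appendEquiv m m').symm ε).1 * α' ((Fin.appendEquiv m m').symm ε).2,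
    ?_, fun ε => ?_⟩
  · rw [← (Fin.appendEquiv m m').sum_comp, Fintype.sum_prod_type, Finset.sum_mul_sum]
    refine Finset.sum_congr rfl fun ε _ => Finset.sum_congr rfl fun ε' _ => ?_
    simp only [Equiv.symm_apply_apply, smul_mul_smul, ← map_mul]
    rw [show Fin.appendEquiv m m' (ε, ε') = Fin.append ε ε' from rfl, stateSign_append]
  · obtain ⟨⟨ε₁, ε₂⟩, rfl⟩ := (Fin.appendEquiv m m').surjective ε
    simp only [Equiv.symm_apply_apply, map_mul, hα, hα', ← ofAdd_add]
    rw [show Fin.appendEquiv m m' (ε₁, ε₂) = Fin.append ε₁ ε₂ from rfl, stateWeight_append]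
    congr 1
    ring

lemma exists_fin_decomposition {f : MonoidAlgebra ℤ G} {d : ℕ} {s : ℤ}
    (h : HasStateExpansion deg f d s) :
    ∃ (a : Fin (2 ^ d) → ℤ) (α : Fin (2 ^ d) → G) (k l : Fin (2 ^ d)),
      f = ∑ i, a i • MonoidAlgebra.of ℤ G (α i) ∧
      deg (α k) = Multiplicative.ofAdd (s - d) ∧
      (∀ i, deg (α i) = Multiplicative.ofAdd (s - d) → i = k) ∧
      deg (α l) = Multiplicative.ofAdd (s + d) ∧
      (∀ i, deg (α i) = Multiplicative.ofAdd (s + d) → i = l) ∧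
      ∀ i, i ≠ k → i ≠ l →
        s - d < Multiplicative.toAdd (deg (α i)) ∧
          Multiplicative.toAdd (deg (α i)) < s + d := by
  obtain ⟨α, hf, hα⟩ := h
  let E : (Fin d → Bool) ≃ Fin (2 ^ d) := Fintype.equivFinOfCardEq (by simp)
  refine ⟨fun i => stateSign (E.symm i), fun i => α (E.symm i), E fun _ => false, E fun _ => true,
    by rw [hf, ← E.symm.sum_comp], by simp [hα, stateWeight_const_false, sub_eq_add_neg],
    fun i hi => ?_, by simp [hα, stateWeight_const_true], fun i hi => ?_, fun i hk hl => ?_⟩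
  · refine E.symm_apply_eq.mp (by_contra fun hne => ?_)
    simp only [hα, EmbeddingLike.apply_eq_iff_eq] at hi
    linarith [neg_lt_stateWeight hne]
  · refine E.symm_apply_eq.mp (by_contra fun hne => ?_)
    simp only [hα, EmbeddingLike.apply_eq_iff_eq] at hi
    linarith [stateWeight_lt hne]
  · have hlow := neg_lt_stateWeight fun h => hk (E.symm_apply_eq.mp h)
    have hhigh := stateWeight_lt fun h => hl (E.symm_apply_eq.mp h)
    simp only [hα, toAdd_ofAdd]
    constructor <;> linarith

end HasStateExpansion

end StateExpansion

theorem hasStateExpansion_etaHat {n : ℕ} (η : SVB n →* MonoidAlgebra ℤ (VB n))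
    (hη : ∀ i : Fin (n - 1),
      η (sσ i) = MonoidAlgebra.of ℤ (VB n) (vσ i) ∧
      η (sσi i) = MonoidAlgebra.of ℤ (VB n) ((vσ i)⁻¹) ∧
      η (sρ i) = MonoidAlgebra.of ℤ (VB n) (vρ i) ∧
      η (sτ i) = MonoidAlgebra.of ℤ (VB n) (vσ i) - MonoidAlgebra.of ℤ (VB n) ((vσ i)⁻¹))
    (sing : SVB n →* Multiplicative ℕ)
    (hsing : ∀ i : Fin (n - 1),
      sing (sτ i) = Multiplicative.ofAdd 1 ∧ sing (sσ i) = Multiplicative.ofAdd 0 ∧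
        sing (sσi i) = Multiplicative.ofAdd 0 ∧ sing (sρ i) = Multiplicative.ofAdd 0)
    (deg : SVB n →* Multiplicative ℤ)
    (hdeg : ∀ i : Fin (n - 1),
      deg (sσ i) = Multiplicative.ofAdd 1 ∧ deg (sσi i) = Multiplicative.ofAdd (-1) ∧
        deg (sρ i) = Multiplicative.ofAdd 0 ∧ deg (sτ i) = Multiplicative.ofAdd 0)
    (degV : VB n →* Multiplicative ℤ)
    (hdegV : ∀ i : Fin (n - 1),
      degV (vσ i) = Multiplicative.ofAdd 1 ∧ degV (vρ i) = Multiplicative.ofAdd 0)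
    (β : SVB n) :
    HasStateExpansion degV (η β) (Multiplicative.toAdd (sing β))
      (Multiplicative.toAdd (deg β)) := by
  have hβ : β ∈ Submonoid.closure (Set.range (PresentedMonoid.of (SVBRel n))) := by
    rw [PresentedMonoid.closure_range_of]; trivial
  simp only [sσ, sσi, sρ, sτ] at hη hsing hdeg
  induction hβ using Submonoid.closure_induction with
  | mem _ hg =>
    obtain ⟨i | i | i | i, rfl⟩ := hg
    · simpa only [(hη i).1, (hsing i).2.1, (hdeg i).1, (hdegV i).1, toAdd_ofAdd] using
        HasStateExpansion.of (deg := degV) (vσ i)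
    · simpa only [(hη i).2.1, (hsing i).2.2.1, (hdeg i).2.1, map_inv, (hdegV i).1, toAdd_inv,
        toAdd_ofAdd] using HasStateExpansion.of (deg := degV) (vσ i)⁻¹
    · simpa only [(hη i).2.2.1, (hsing i).2.2.2, (hdeg i).2.2.1, (hdegV i).2, toAdd_ofAdd] using
        HasStateExpansion.of (deg := degV) (vρ i)
    · rw [(hη i).2.2.2, (hsing i).1, (hdeg i).2.2.2, toAdd_ofAdd, toAdd_ofAdd]
      exact HasStateExpansion.of_sub_of (by rw [zero_add, (hdegV i).1])
        (by rw [map_inv, (hdegV i).1, zero_sub, ofAdd_neg])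
  | one => simpa only [map_one, toAdd_one] using HasStateExpansion.of (deg := degV) 1
  | mul _ _ _ _ hx hy => simpa only [map_mul, toAdd_mul] using hx.mul hy

theorem etaHat_degree_decomposition_general (n : ℕ)
    (η : SVB n →* MonoidAlgebra ℤ (VB n))
    (hη : ∀ i : Fin (n - 1),
      η (sσ i) = MonoidAlgebra.of ℤ (VB n) (vσ i) ∧
      η (sσi i) = MonoidAlgebra.of ℤ (VB n) ((vσ i)⁻¹) ∧
      η (sρ i) = MonoidAlgebra.of ℤ (VB n) (vρ i) ∧
      η (sτ i) = MonoidAlgebra.of ℤ (VB n) (vσ i) - MonoidAlgebra.of ℤ (VB n) ((vσ i)⁻¹))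
    (sing : SVB n →* Multiplicative ℕ)
    (hsing : ∀ i : Fin (n - 1),
      sing (sτ i) = Multiplicative.ofAdd 1 ∧ sing (sσ i) = Multiplicative.ofAdd 0 ∧
        sing (sσi i) = Multiplicative.ofAdd 0 ∧ sing (sρ i) = Multiplicative.ofAdd 0)
    (deg : SVB n →* Multiplicative ℤ)
    (hdeg : ∀ i : Fin (n - 1),
      deg (sσ i) = Multiplicative.ofAdd 1 ∧ deg (sσi i) = Multiplicative.ofAdd (-1) ∧
        deg (sρ i) = Multiplicative.ofAdd 0 ∧ deg (sτ i) = Multiplicative.ofAdd 0)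
    (degV : VB n →* Multiplicative ℤ)
    (hdegV : ∀ i : Fin (n - 1),
      degV (vσ i) = Multiplicative.ofAdd 1 ∧ degV (vρ i) = Multiplicative.ofAdd 0)
    (β : SVB n) (d : ℕ) (s : ℤ)
    (hd : sing β = Multiplicative.ofAdd d) (hs : deg β = Multiplicative.ofAdd s) :
    ∃ (a : Fin (2 ^ d) → ℤ) (α : Fin (2 ^ d) → VB n) (k l : Fin (2 ^ d)),
      η β = ∑ i, a i • MonoidAlgebra.of ℤ (VB n) (α i) ∧
      degV (α k) = Multiplicative.ofAdd (s - d) ∧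
      (∀ i, degV (α i) = Multiplicative.ofAdd (s - d) → i = k) ∧
      degV (α l) = Multiplicative.ofAdd (s + d) ∧
      (∀ i, degV (α i) = Multiplicative.ofAdd (s + d) → i = l) ∧
      ∀ i, i ≠ k → i ≠ l →
        s - d < Multiplicative.toAdd (degV (α i)) ∧
          Multiplicative.toAdd (degV (α i)) < s + d := by
  have h := hasStateExpansion_etaHat η hη sing hsing deg hdeg degV hdegV β
  rw [hd, hs, toAdd_ofAdd, toAdd_ofAdd] at h
  exact h.exists_fin_decomposition

/-- If `β ∈ SVB_n` has exactly `d` singularities and degree `s`, then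
`η̂(β) = Σ_{i=1}^{2^d} a_i α_i` with `a_i ∈ ℤ`, `α_i ∈ VB_n`, there are unique indices `k, l`
with `deg(α_k) = s - d` and `deg(α_l) = s + d`, and every other term has degree strictly
between `s - d` and `s + d`. -/
theorem etaHat_degree_decomposition (n : ℕ) (hn : 2 ≤ n)
    (η : SVB n →* MonoidAlgebra ℤ (VB n))
    (hη : ∀ i : Fin (n - 1),
      η (sσ i) = MonoidAlgebra.of ℤ (VB n) (vσ i) ∧
      η (sσi i) = MonoidAlgebra.of ℤ (VB n) ((vσ i)⁻¹) ∧
      η (sρ i) = MonoidAlgebra.of ℤ (VB n) (vρ i) ∧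
      η (sτ i) = MonoidAlgebra.of ℤ (VB n) (vσ i) - MonoidAlgebra.of ℤ (VB n) ((vσ i)⁻¹))
    (sing : SVB n →* Multiplicative ℕ)
    (hsing : ∀ i : Fin (n - 1),
      sing (sτ i) = Multiplicative.ofAdd 1 ∧ sing (sσ i) = Multiplicative.ofAdd 0 ∧
        sing (sσi i) = Multiplicative.ofAdd 0 ∧ sing (sρ i) = Multiplicative.ofAdd 0)
    (deg : SVB n →* Multiplicative ℤ)
    (hdeg : ∀ i : Fin (n - 1),
      deg (sσ i) = Multiplicative.ofAdd 1 ∧ deg (sσi i) = Multiplicative.ofAdd (-1) ∧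
        deg (sρ i) = Multiplicative.ofAdd 0 ∧ deg (sτ i) = Multiplicative.ofAdd 0)
    (degV : VB n →* Multiplicative ℤ)
    (hdegV : ∀ i : Fin (n - 1),
      degV (vσ i) = Multiplicative.ofAdd 1 ∧ degV (vρ i) = Multiplicative.ofAdd 0)
    (β : SVB n) (d : ℕ) (s : ℤ)
    (hd : sing β = Multiplicative.ofAdd d) (hs : deg β = Multiplicative.ofAdd s) :
    ∃ (a : Fin (2 ^ d) → ℤ) (α : Fin (2 ^ d) → VB n) (k l : Fin (2 ^ d)),
      η β = ∑ i, a i • MonoidAlgebra.of ℤ (VB n) (α i) ∧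
      degV (α k) = Multiplicative.ofAdd (s - d) ∧
      (∀ i, degV (α i) = Multiplicative.ofAdd (s - d) → i = k) ∧
      degV (α l) = Multiplicative.ofAdd (s + d) ∧
      (∀ i, degV (α i) = Multiplicative.ofAdd (s + d) → i = l) ∧
      ∀ i, i ≠ k → i ≠ l →
        s - d < Multiplicative.toAdd (degV (α i)) ∧
          Multiplicative.toAdd (degV (α i)) < s + d :=
  etaHat_degree_decomposition_general n η hη sing hsing deg hdeg degV hdegV β d s hd hs

end SVBPaper
end

section
/- Let η̂ : SVB_n → ℤ[VB_n] be the desingularization map and let a ∈ ℤ (viewed as a·1 in ℤ[VB_n]). Then η̂^{-1}({a}) = {1} if a = 1, and η̂^{-1}({a}) = ∅ otherwise. In particular, if η̂(β) = 1 then β = 1 in SVB_n. -/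
namespace SVBPaper

/-!
Write `β` as a word in the generators. If the word contains some `τ_i`, then the augmentation
`ℤ[VB_n] → ℤ` kills `η̂(τ_i) = σ_i - σ_i⁻¹` and hence `η̂(β)`; but `η̂(β) ≠ 0`, since the character
`σ_i ↦ 2`, `ρ_i ↦ 1` of `VB_n` sends the image of every generator (`η̂(τ_i)` to `3/2`) to a positive
rational. So `η̂(β) = a·1` forces `a = 0` and `η̂(β) = 0`, which is impossible. If the word is
`τ`-free, `η̂(β)` is a single group element `g`, and `g = a·1` only for `g = 1`, `a = 1`. As `σ_i` and
`ρ_i` are invertible in `SVB_n`, the assignment `σ_i ↦ σ_i`, `ρ_i ↦ ρ_i` defines a homomorphism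
`VB_n → SVB_n` that sends `g` back to `β`, so `β = 1`.
-/

variable {n : ℕ}

open PresentedMonoid

theorem MonoidAlgebra.of_eq_algebraMap_iff {R G : Type*} [CommSemiring R] [Nontrivial R]
    [Monoid G] {g : G} {a : R} :
    MonoidAlgebra.of R G g = algebraMap R (MonoidAlgebra R G) a ↔ g = 1 ∧ a = 1 := by
  rw [MonoidAlgebra.of_apply, MonoidAlgebra.coe_algebraMap, Function.comp_apply,
    Algebra.algebraMap_self_apply, MonoidAlgebra.single_inj]
  simp [eq_comm]

noncomputable def MonoidAlgebra.augmentation (R G : Type*) [CommSemiring R] [Monoid G] :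
    MonoidAlgebra R G →ₐ[R] R :=
  MonoidAlgebra.lift R R G 1

theorem SVB.induction_on {p : SVB n → Prop} (β : SVB n) (one : p 1)
    (mul : ∀ x y, p x → p y → p (x * y)) (σ : ∀ i, p (sσ i)) (σ_inv : ∀ i, p (sσi i))
    (ρ : ∀ i, p (sρ i)) (τ : ∀ i, p (sτ i)) : p β := by
  have hβ : β ∈ Submonoid.closure (Set.range (PresentedMonoid.of (SVBRel n))) := by
    rw [closure_range_of]; trivial
  induction hβ using Submonoid.closure_induction with
  | mem _ hx =>
    obtain ⟨x | x | x | x, rfl⟩ := hx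
    exacts [σ x, σ_inv x, ρ x, τ x]
  | one => exact one
  | mul x y _ _ hx hy => exact mul x y hx hy

theorem sσ_mul_sσi (i : Fin (n - 1)) : sσ i * sσi i = 1 :=
  mk_eq_mk_of_rel (SVBRel.inv_right i)

theorem sσi_mul_sσ (i : Fin (n - 1)) : sσi i * sσ i = 1 :=
  mk_eq_mk_of_rel (SVBRel.inv_left i)

theorem sρ_mul_sρ (i : Fin (n - 1)) : sρ i * sρ i = 1 :=
  mk_eq_mk_of_rel (SVBRel.rho_sq i)

def VBGen.toSVBGen : VBGen n → SVBGen n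
  | .s i => .s i
  | .r i => .r i

theorem VBGen.idx_toSVBGen (x : VBGen n) : x.toSVBGen.idx = x.idx := by
  cases x <;> rfl

def VBGen.toSVBUnit : VBGen n → (SVB n)ˣ
  | .s i => ⟨sσ i, sσi i, sσ_mul_sσi i, sσi_mul_sσ i⟩
  | .r i => ⟨sρ i, sρ i, sρ_mul_sρ i, sρ_mul_sρ i⟩

theorem VBGen.val_toSVBUnit (x : VBGen n) :
    (x.toSVBUnit : SVB n) = PresentedMonoid.of (SVBRel n) x.toSVBGen := by
  cases x <;> rfl

theorem VBGen.lift_toSVBUnit_rel (w : FreeGroup (VBGen n)) (hw : w ∈ {w | VBRel n w}) :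
    FreeGroup.lift VBGen.toSVBUnit w = 1 := by
  cases hw with
  | comm x y h =>
    simp only [map_mul, map_inv, FreeGroup.lift_apply_of, mul_inv_eq_iff_eq_mul]
    ext
    simp only [Units.val_mul, VBGen.val_toSVBUnit]
    exact mk_eq_mk_of_rel (SVBRel.comm _ _ (by rwa [VBGen.idx_toSVBGen, VBGen.idx_toSVBGen]))
  | rho_sq i => ext; exact sρ_mul_sρ i
  | braid_s i h =>
    simp only [map_mul, map_inv, FreeGroup.lift_apply_of, mul_inv_eq_one]
    ext; exact mk_eq_mk_of_rel (SVBRel.braid_s i h)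
  | braid_r i h =>
    simp only [map_mul, map_inv, FreeGroup.lift_apply_of, mul_inv_eq_one]
    ext; exact mk_eq_mk_of_rel (SVBRel.braid_r i h)
  | mixed_rs i h =>
    simp only [map_mul, map_inv, FreeGroup.lift_apply_of, mul_inv_eq_one]
    ext; exact mk_eq_mk_of_rel (SVBRel.mixed_rs i h)

def VB.toSVB : VB n →* SVB n :=
  (Units.coeHom (SVB n)).comp (PresentedGroup.toGroup VBGen.lift_toSVBUnit_rel)

theorem VB.toSVB_vσ (i : Fin (n - 1)) : VB.toSVB (vσ i) = sσ i := by
  simp [VB.toSVB, vσ, PresentedGroup.toGroup.of, VBGen.toSVBUnit]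

theorem VB.toSVB_vσ_inv (i : Fin (n - 1)) : VB.toSVB (vσ i)⁻¹ = sσi i := by
  simp [VB.toSVB, vσ, PresentedGroup.toGroup.of, VBGen.toSVBUnit]

theorem VB.toSVB_vρ (i : Fin (n - 1)) : VB.toSVB (vρ i) = sρ i := by
  simp [VB.toSVB, vρ, PresentedGroup.toGroup.of, VBGen.toSVBUnit]

def VBGen.degree : VBGen n → Multiplicative ℤ
  | .s _ => .ofAdd 1
  | .r _ => 1

theorem VBGen.lift_degree_rel (w : FreeGroup (VBGen n)) (hw : w ∈ {w | VBRel n w}) :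
    FreeGroup.lift VBGen.degree w = 1 := by
  apply Multiplicative.toAdd.injective
  cases hw <;> simp [VBGen.degree]

def VB.degree : VB n →* Multiplicative ℤ := PresentedGroup.toGroup VBGen.lift_degree_rel

def VB.weight : VB n →* ℚ :=
  (Units.coeHom ℚ).comp ((zpowersHom ℚˣ (Units.mk0 2 two_ne_zero)).comp VB.degree)

theorem VB.weight_vσ (i : Fin (n - 1)) : VB.weight (vσ i) = 2 := by
  simp [VB.weight, VB.degree, vσ, VBGen.degree]

theorem VB.weight_vρ (i : Fin (n - 1)) : VB.weight (vρ i) = 1 := by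
  simp [VB.weight, VB.degree, vρ, VBGen.degree]

def IsDesingularization (η : SVB n →* MonoidAlgebra ℤ (VB n)) : Prop :=
  ∀ i : Fin (n - 1),
    η (sσ i) = MonoidAlgebra.of ℤ (VB n) (vσ i) ∧
    η (sσi i) = MonoidAlgebra.of ℤ (VB n) ((vσ i)⁻¹) ∧
    η (sρ i) = MonoidAlgebra.of ℤ (VB n) (vρ i) ∧
    η (sτ i) = MonoidAlgebra.of ℤ (VB n) (vσ i) - MonoidAlgebra.of ℤ (VB n) ((vσ i)⁻¹)

namespace IsDesingularization

variable {η : SVB n →* MonoidAlgebra ℤ (VB n)}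

theorem lift_weight_pos (hη : IsDesingularization η) (β : SVB n) :
    0 < MonoidAlgebra.lift ℤ ℚ (VB n) VB.weight (η β) := by
  induction β using SVB.induction_on with
  | one => simp
  | mul x y hx hy => rw [map_mul, map_mul]; exact mul_pos hx hy
  | σ i => simp [(hη i).1, VB.weight_vσ]
  | σ_inv i => simp [(hη i).2.1, VB.weight_vσ]
  | ρ i => simp [(hη i).2.2.1, VB.weight_vρ]
  | τ i => simp [(hη i).2.2.2, VB.weight_vσ]; norm_num

theorem apply_ne_zero (hη : IsDesingularization η) (β : SVB n) : η β ≠ 0 := fun h0 =>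
  (hη.lift_weight_pos β).ne' (by rw [h0, map_zero])

theorem exists_of_or_augmentation_eq_zero (hη : IsDesingularization η) (β : SVB n) :
    (∃ g, η β = MonoidAlgebra.of ℤ (VB n) g ∧ VB.toSVB g = β) ∨
      MonoidAlgebra.augmentation ℤ (VB n) (η β) = 0 := by
  induction β using SVB.induction_on with
  | one => exact .inl ⟨1, (map_one η).trans (map_one _).symm, map_one _⟩
  | mul x y hx hy =>
    rcases hx with ⟨g, hgx, rfl⟩ | hx
    · rcases hy with ⟨h, hhy, rfl⟩ | hy
      · exact .inl ⟨g * h, by simp [hgx, hhy]⟩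
      · exact .inr (by rw [map_mul, map_mul, hy, mul_zero])
    · exact .inr (by rw [map_mul, map_mul, hx, zero_mul])
  | σ i => exact .inl ⟨vσ i, (hη i).1, VB.toSVB_vσ i⟩
  | σ_inv i => exact .inl ⟨(vσ i)⁻¹, (hη i).2.1, VB.toSVB_vσ_inv i⟩
  | ρ i => exact .inl ⟨vρ i, (hη i).2.2.1, VB.toSVB_vρ i⟩
  | τ i => exact .inr (by simp [(hη i).2.2.2, MonoidAlgebra.augmentation])

theorem apply_eq_algebraMap_iff (hη : IsDesingularization η) (β : SVB n) (a : ℤ) :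
    η β = algebraMap ℤ (MonoidAlgebra ℤ (VB n)) a ↔ a = 1 ∧ β = 1 := by
  refine ⟨fun hβ => ?_, fun ⟨ha, hβ⟩ => by rw [ha, hβ, map_one, map_one]⟩
  rcases hη.exists_of_or_augmentation_eq_zero β with ⟨g, hg, rfl⟩ | h0
  · obtain ⟨rfl, rfl⟩ := MonoidAlgebra.of_eq_algebraMap_iff.1 (hg ▸ hβ)
    exact ⟨rfl, map_one _⟩
  · have ha : a = 0 := by rwa [hβ, AlgHom.commutes] at h0
    exact absurd (by rw [hβ, ha, map_zero]) (hη.apply_ne_zero β)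

end IsDesingularization

theorem etaHat_preimage_scalar_general (n : ℕ)
    (η : SVB n →* MonoidAlgebra ℤ (VB n))
    (hη : ∀ i : Fin (n - 1),
      η (sσ i) = MonoidAlgebra.of ℤ (VB n) (vσ i) ∧
      η (sσi i) = MonoidAlgebra.of ℤ (VB n) ((vσ i)⁻¹) ∧
      η (sρ i) = MonoidAlgebra.of ℤ (VB n) (vρ i) ∧
      η (sτ i) = MonoidAlgebra.of ℤ (VB n) (vσ i) - MonoidAlgebra.of ℤ (VB n) ((vσ i)⁻¹))
    (a : ℤ) :
    (⇑η) ⁻¹' {algebraMap ℤ (MonoidAlgebra ℤ (VB n)) a} =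
      if a = 1 then {1} else ∅ := by
  ext β
  rw [Set.mem_preimage, Set.mem_singleton_iff,
    IsDesingularization.apply_eq_algebraMap_iff hη β a]
  split_ifs with ha <;> simp [ha]

/-- For `a ∈ ℤ`, the preimage of `a·1` under the desingularization map
`η̂ : SVB_n → ℤ[VB_n]` is `{1}` if `a = 1` and empty otherwise. -/
theorem etaHat_preimage_scalar (n : ℕ) (hn : 2 ≤ n)
    (η : SVB n →* MonoidAlgebra ℤ (VB n))
    (hη : ∀ i : Fin (n - 1),
      η (sσ i) = MonoidAlgebra.of ℤ (VB n) (vσ i) ∧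
      η (sσi i) = MonoidAlgebra.of ℤ (VB n) ((vσ i)⁻¹) ∧
      η (sρ i) = MonoidAlgebra.of ℤ (VB n) (vρ i) ∧
      η (sτ i) = MonoidAlgebra.of ℤ (VB n) (vσ i) - MonoidAlgebra.of ℤ (VB n) ((vσ i)⁻¹))
    (a : ℤ) :
    (⇑η) ⁻¹' {algebraMap ℤ (MonoidAlgebra ℤ (VB n)) a} =
      if a = 1 then {1} else ∅ :=
  etaHat_preimage_scalar_general n η hη a

end SVBPaper
end

section
/- The virtual braid group VB_n embeds in the singular virtual braid monoid SVB_n: the natural monoid homomorphism VB_n → SVB_n sending σ_i ↦ σ_i and ρ_i ↦ ρ_i is injective. -/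
namespace SVBPaper

/-! The assignment `σ_i ↦ σ_i`, `σ_i⁻¹ ↦ σ_i⁻¹`, `ρ_i ↦ ρ_i`, `τ_i ↦ σ_i` respects every defining
relation of `SVB_n`: the relations involving `τ` become the far commutations, the braid relation,
the mixed relation and a triviality in `VB_n`. It therefore defines a retraction `SVB_n → VB_n`,
which is a left inverse of any homomorphism `VB_n → SVB_n` fixing `σ_i` and `ρ_i`. -/

section Retraction

variable {n : ℕ}

lemma VBGen.commute_of_far {x y : VBGen n} (h : Far x.idx y.idx) :
    Commute (PresentedGroup.of x : VB n) (PresentedGroup.of y) := by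
  rw [← commutatorElement_eq_one_iff_commute, commutatorElement_def]
  exact PresentedGroup.one_of_mem (VBRel.comm x y h)

lemma vρ_mul_self (i : Fin (n - 1)) : vρ i * vρ i = 1 :=
  PresentedGroup.one_of_mem (VBRel.rho_sq i)

lemma vσ_braid (i : Fin (n - 1)) (h : (i : ℕ) + 1 < n - 1) :
    vσ i * vσ ⟨i + 1, h⟩ * vσ i = vσ ⟨i + 1, h⟩ * vσ i * vσ ⟨i + 1, h⟩ :=
  PresentedGroup.mk_eq_mk_of_mul_inv_mem (VBRel.braid_s i h)

lemma vρ_braid (i : Fin (n - 1)) (h : (i : ℕ) + 1 < n - 1) :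
    vρ i * vρ ⟨i + 1, h⟩ * vρ i = vρ ⟨i + 1, h⟩ * vρ i * vρ ⟨i + 1, h⟩ :=
  PresentedGroup.mk_eq_mk_of_mul_inv_mem (VBRel.braid_r i h)

lemma vρ_vσ_vρ (i : Fin (n - 1)) (h : (i : ℕ) + 1 < n - 1) :
    vρ i * vσ ⟨i + 1, h⟩ * vρ i = vρ ⟨i + 1, h⟩ * vσ i * vρ ⟨i + 1, h⟩ :=
  PresentedGroup.mk_eq_mk_of_mul_inv_mem (VBRel.mixed_rs i h)

def SVBGen.toVBGen : SVBGen n → VBGen n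
  | .s i | .si i | .t i => .s i
  | .r i => .r i

lemma SVBGen.idx_toVBGen (x : SVBGen n) : x.toVBGen.idx = x.idx := by
  cases x <;> rfl

def retractGen : SVBGen n → VB n
  | .s i => vσ i
  | .si i => (vσ i)⁻¹
  | .r i => vρ i
  | .t i => vσ i

lemma retractGen_eq_zpow (x : SVBGen n) :
    ∃ k : ℤ, retractGen x = PresentedGroup.of x.toVBGen ^ k := by
  cases x with
  | si i => exact ⟨-1, (zpow_neg_one _).symm⟩
  | _ i => exact ⟨1, (zpow_one _).symm⟩

lemma retractGen_commute_of_far {x y : SVBGen n} (h : Far x.idx y.idx) :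
    Commute (retractGen x) (retractGen y) := by
  obtain ⟨k, hk⟩ := retractGen_eq_zpow x
  obtain ⟨l, hl⟩ := retractGen_eq_zpow y
  rw [hk, hl]
  refine (VBGen.commute_of_far ?_).zpow_zpow k l
  rwa [SVBGen.idx_toVBGen, SVBGen.idx_toVBGen]

lemma retractGen_respects_rel {a b : FreeMonoid (SVBGen n)} (hab : SVBRel n a b) :
    FreeMonoid.lift retractGen a = FreeMonoid.lift retractGen b := by
  induction hab with
  | comm x y h => simpa using (retractGen_commute_of_far h).eq
  | inv_right i => simp [retractGen]
  | inv_left i => simp [retractGen]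
  | rho_sq i => simpa [retractGen] using vρ_mul_self i
  | braid_s i h | sst i h => simpa [retractGen] using vσ_braid i h
  | braid_r i h => simpa [retractGen] using vρ_braid i h
  | mixed_rs i h | mixed_rt i h => simpa [retractGen] using vρ_vσ_vρ i h
  | ts i => simp [retractGen]

def retract : SVB n →* VB n :=
  PresentedMonoid.lift retractGen fun _ _ ↦ retractGen_respects_rel

lemma retract_comp_eq_id {ι : VB n →* SVB n} (hσ : ∀ i, ι (vσ i) = sσ i)
    (hρ : ∀ i, ι (vρ i) = sρ i) : retract.comp ι = MonoidHom.id (VB n) := by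
  refine PresentedGroup.ext fun x ↦ ?_
  cases x with
  | s i => exact congrArg retract (hσ i)
  | r i => exact congrArg retract (hρ i)

end Retraction

theorem VB_embeds_in_SVB_general (n : ℕ) (ι : VB n →* SVB n)
    (hι : ∀ i : Fin (n - 1),
      ι (vσ i) = sσ i ∧ ι ((vσ i)⁻¹) = sσi i ∧ ι (vρ i) = sρ i) :
    Function.Injective ι :=
  Function.LeftInverse.injective (g := retract)
    (DFunLike.congr_fun (retract_comp_eq_id (fun i ↦ (hι i).1) fun i ↦ (hι i).2.2))

/-- The natural monoid homomorphism `VB_n → SVB_n`, `σ_i ↦ σ_i`,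
`ρ_i ↦ ρ_i`, is injective. -/
theorem VB_embeds_in_SVB (n : ℕ) (hn : 2 ≤ n) (ι : VB n →* SVB n)
    (hι : ∀ i : Fin (n - 1),
      ι (vσ i) = sσ i ∧ ι ((vσ i)⁻¹) = sσi i ∧ ι (vρ i) = sρ i) :
    Function.Injective ι :=
  VB_embeds_in_SVB_general n ι hι

end SVBPaper
end

section
/- For β_0, β_1 ∈ B_n and 1 ≤ i, j ≤ n−1, the following are equivalent in the singular braid monoid SB_n: (1) (β_0σ_iβ_0^{-1})(β_1σ_jβ_1^{-1}) = (β_1σ_jβ_1^{-1})(β_0σ_iβ_0^{-1}); (2) (β_0τ_iβ_0^{-1})(β_1τ_jβ_1^{-1}) = (β_1τ_jβ_1^{-1})(β_0τ_iβ_0^{-1}). -/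
namespace SVBPaper

/-- The relators of the classical braid group `B_n`: `i` encodes the generator `σ_i`. -/
inductive BRel (n : ℕ) : FreeGroup (Fin (n - 1)) → Prop
  | comm (i j : Fin (n - 1)) (h : Far i j) :
      BRel n (.of i * .of j * (FreeGroup.of i)⁻¹ * (FreeGroup.of j)⁻¹)
  | braid (i : Fin (n - 1)) (h : (i : ℕ) + 1 < n - 1) :
      BRel n (.of i * .of ⟨i + 1, h⟩ * .of i *
        (FreeGroup.of ⟨i + 1, h⟩ * FreeGroup.of i * FreeGroup.of ⟨i + 1, h⟩)⁻¹)

/-- The braid group on `n` strands. -/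
abbrev B (n : ℕ) : Type := PresentedGroup {w | BRel n w}

/-- `σ_i` in `B_n`. -/
def bσ {n : ℕ} (i : Fin (n - 1)) : B n := PresentedGroup.of i

/-- Generators of the singular braid monoid: `s i` is `σ_i`, `si i` is `σ_i⁻¹`, `t i` is `τ_i`. -/
inductive SBGen (n : ℕ) : Type
  | s  : Fin (n - 1) → SBGen n
  | si : Fin (n - 1) → SBGen n
  | t  : Fin (n - 1) → SBGen n

def SBGen.idx {n : ℕ} : SBGen n → Fin (n - 1)
  | s i => i
  | si i => i
  | t i => i

/-- The defining relations of the singular braid monoid `SB_n`. -/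
inductive SBRel (n : ℕ) : FreeMonoid (SBGen n) → FreeMonoid (SBGen n) → Prop
  | comm (x y : SBGen n) (h : Far x.idx y.idx) :
      SBRel n (.of x * .of y) (.of y * .of x)
  | inv_right (i : Fin (n - 1)) : SBRel n (.of (.s i) * .of (.si i)) 1
  | inv_left (i : Fin (n - 1)) : SBRel n (.of (.si i) * .of (.s i)) 1
  | braid_s (i : Fin (n - 1)) (h : (i : ℕ) + 1 < n - 1) :
      SBRel n (.of (.s i) * .of (.s ⟨i + 1, h⟩) * .of (.s i))
        (.of (.s ⟨i + 1, h⟩) * .of (.s i) * .of (.s ⟨i + 1, h⟩))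
  | ts (i : Fin (n - 1)) : SBRel n (.of (.t i) * .of (.s i)) (.of (.s i) * .of (.t i))
  | sst (i : Fin (n - 1)) (h : (i : ℕ) + 1 < n - 1) :
      SBRel n (.of (.s i) * .of (.s ⟨i + 1, h⟩) * .of (.t i))
        (.of (.t ⟨i + 1, h⟩) * .of (.s i) * .of (.s ⟨i + 1, h⟩))

/-- The singular braid monoid on `n` strands. -/
abbrev SB (n : ℕ) : Type := PresentedMonoid (SBRel n)

/-- `σ_i` in `SB_n`. -/
def Sσ {n : ℕ} (i : Fin (n - 1)) : SB n := PresentedMonoid.of (SBRel n) (.s i)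
/-- `σ_i⁻¹` in `SB_n`. -/
def Sσi {n : ℕ} (i : Fin (n - 1)) : SB n := PresentedMonoid.of (SBRel n) (.si i)
/-- `τ_i` in `SB_n`. -/
def Sτ {n : ℕ} (i : Fin (n - 1)) : SB n := PresentedMonoid.of (SBRel n) (.t i)


/-- A conjugate by a unit commutes with `y` iff the original element commutes with the
reverse-conjugate of `y`. -/
theorem conj_comm_iff {M : Type*} [Monoid M] (u : Mˣ) (x y : M) :
    (↑u * x * ↑u⁻¹) * y = y * (↑u * x * ↑u⁻¹) ↔
    x * (↑u⁻¹ * y * ↑u) = (↑u⁻¹ * y * ↑u) * x := by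
  constructor
  · intro h
    have h2 := congrArg (fun z => (↑u⁻¹ : M) * z * ↑u) h
    simpa [mul_assoc] using h2
  · intro h
    have h2 := congrArg (fun z => (↑u : M) * z * ↑u⁻¹) h
    simpa [mul_assoc] using h2

/-- For `β₀, β₁ ∈ B_n` and `1 ≤ i, j ≤ n-1`, the conjugates
`β₀σ_iβ₀⁻¹, β₁σ_jβ₁⁻¹` commute in `SB_n` if and only if the conjugates
`β₀τ_iβ₀⁻¹, β₁τ_jβ₁⁻¹` commute in `SB_n`. (The Fenn–Rolfsen–Zhu theorem is taken as a
hypothesis.) -/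
theorem conjugate_commutation_sigma_iff_tau (n : ℕ) (hn : 2 ≤ n)
    (κ : B n →* (SB n)ˣ)
    (hκ : ∀ i : Fin (n - 1),
      ((κ (bσ i) : (SB n)ˣ) : SB n) = Sσ i ∧
      (((κ (bσ i))⁻¹ : (SB n)ˣ) : SB n) = Sσi i)
    (FRZ : ∀ (β : SB n) (i j : Fin (n - 1)),
      β * Sσ i = Sσ j * β ↔ β * Sτ i = Sτ j * β)
    (β₀ β₁ : B n) (i j : Fin (n - 1)) :
    (↑(κ β₀) * Sσ i * ↑(κ β₀)⁻¹) * (↑(κ β₁) * Sσ j * ↑(κ β₁)⁻¹) =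
      (↑(κ β₁) * Sσ j * ↑(κ β₁)⁻¹) * (↑(κ β₀) * Sσ i * ↑(κ β₀)⁻¹) ↔
    (↑(κ β₀) * Sτ i * ↑(κ β₀)⁻¹) * (↑(κ β₁) * Sτ j * ↑(κ β₁)⁻¹) =
      (↑(κ β₁) * Sτ j * ↑(κ β₁)⁻¹) * (↑(κ β₀) * Sτ i * ↑(κ β₀)⁻¹) := by
  set a : (SB n)ˣ := κ β₀ with ha
  set b : (SB n)ˣ := κ β₁ with hb
  set γ : (SB n)ˣ := a⁻¹ * b with hγdef
  have hγ : ∀ X : SB n, (↑a⁻¹ : SB n) * (↑b * X * ↑b⁻¹) * ↑a = ↑γ * X * ↑γ⁻¹ := by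
    intro X
    simp [hγdef, mul_assoc]
  rw [conj_comm_iff a (Sσ i) _, conj_comm_iff a (Sτ i) _, hγ, hγ]
  calc Sσ i * (↑γ * Sσ j * ↑γ⁻¹) = (↑γ * Sσ j * ↑γ⁻¹) * Sσ i
      ↔ (↑γ * Sσ j * ↑γ⁻¹) * Sσ i = Sσ i * (↑γ * Sσ j * ↑γ⁻¹) := eq_comm
    _ ↔ (↑γ * Sσ j * ↑γ⁻¹) * Sτ i = Sτ i * (↑γ * Sσ j * ↑γ⁻¹) := FRZ _ i i
    _ ↔ Sσ j * (↑γ⁻¹ * Sτ i * ↑γ) = (↑γ⁻¹ * Sτ i * ↑γ) * Sσ j := conj_comm_iff γ _ _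
    _ ↔ (↑γ⁻¹ * Sτ i * ↑γ) * Sσ j = Sσ j * (↑γ⁻¹ * Sτ i * ↑γ) := eq_comm
    _ ↔ (↑γ⁻¹ * Sτ i * ↑γ) * Sτ j = Sτ j * (↑γ⁻¹ * Sτ i * ↑γ) := FRZ _ j j
    _ ↔ Sτ j * (↑γ⁻¹ * Sτ i * ↑γ) = (↑γ⁻¹ * Sτ i * ↑γ) * Sτ j := eq_comm
    _ ↔ (↑γ * Sτ j * ↑γ⁻¹) * Sτ i = Sτ i * (↑γ * Sτ j * ↑γ⁻¹) := (conj_comm_iff γ _ _).symm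
    _ ↔ Sτ i * (↑γ * Sτ j * ↑γ⁻¹) = (↑γ * Sτ j * ↑γ⁻¹) * Sτ i := eq_comm

end SVBPaper
end

section
/- The singular virtual braid monoid decomposes as SVB_n = SVP_n ⋊ S_n, where SVP_n is the kernel of θ : SVB_n → S_n and S_n acts on SVP_n by π · X_{i,j}^{ε} = X_{π(i),π(j)}^{ε} and π · Y_{i,j} = Y_{π(i),π(j)}. -/
namespace SVBPaper

/-- `ρ_k` in `SVB_n`, indexed by a natural number (`1` if out of range). -/
def rhoN {n : ℕ} (k : ℕ) : SVB n := if h : k < n - 1 then sρ ⟨k, h⟩ else 1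
/-- `σ_k^{ε}` in `SVB_n` (`ε = true` is `σ_k`, `ε = false` is `σ_k⁻¹`). -/
def sigN {n : ℕ} (ε : Bool) (k : ℕ) : SVB n :=
  if h : k < n - 1 then (if ε then sσ ⟨k, h⟩ else sσi ⟨k, h⟩) else 1
/-- `τ_k` in `SVB_n`, indexed by a natural number. -/
def tauN {n : ℕ} (k : ℕ) : SVB n := if h : k < n - 1 then sτ ⟨k, h⟩ else 1
/-- The list `[ρ_{a+1}, …, ρ_{b-1}]`. -/
def chain (n : ℕ) (a b : ℕ) : List (SVB n) := (List.range' (a + 1) (b - a - 1)).map rhoN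

/-- The pure generator `X_{i,j}^{ε}` of `SVP_n`:
for `i < j` it is `ρ_{j-1} ⋯ ρ_{i+1} ρ_i σ_i^ε ρ_i ρ_{i+1} ⋯ ρ_{j-1}`, and
for `i > j` it is `ρ_{i-1} ⋯ ρ_{j+1} σ_j^ε ρ_{j+1} ⋯ ρ_{i-1}` (strands are `0`-indexed). -/
def Xe {n : ℕ} (i j : Fin n) (ε : Bool) : SVB n :=
  if (i : ℕ) < (j : ℕ) then
    (chain n i j).reverse.prod * rhoN i * sigN ε i * rhoN i * (chain n i j).prod
  else
    (chain n j i).reverse.prod * sigN ε j * (chain n j i).prod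

/-- The pure generator `Y_{i,j}` of `SVP_n`, given by the same formulas as `X_{i,j}`
with `τ` in place of `σ`. -/
def Ye {n : ℕ} (i j : Fin n) : SVB n :=
  if (i : ℕ) < (j : ℕ) then
    (chain n i j).reverse.prod * rhoN i * tauN i * rhoN i * (chain n i j).prod
  else
    (chain n j i).reverse.prod * tauN j * (chain n j i).prod

/-!
Conjugation by the involution `ρ_k` is an endomorphism `c_k` of `SVB_n`, and `X_{i,j}`, `Y_{i,j}`
arise from `σ_i^{±1}`, `τ_i` by composing such conjugations along a chain of `ρ`'s. As `τ` is a
homomorphism and `S_n` is generated by adjacent transpositions, it suffices to show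
`c_k (X_{a,b}) = X_{s_k a, s_k b}`. This is a case analysis on the position of `k` relative to
`a` and `b`, which only uses that `ρ_k` commutes with generators of index far from `k` and the
mixed relations `ρ_k g_{k+1} ρ_k = ρ_{k+1} g_k ρ_{k+1}` for `g = ρ, σ^{±1}, τ`.
Bijectivity of `SVP_n × S_n → SVB_n` holds for any monoid homomorphism onto a group with a
section `τ`: `x = (x τ(θ x)⁻¹) τ(θ x)`.
-/

section SplitExtension

variable {M G : Type*} [Monoid M] [Group G]

theorem bijective_mker_prod_mul_of_section (θ : M →* G) (s : G →* Mˣ)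
    (hs : ∀ g, θ (s g) = g) :
    Function.Bijective (fun p : MonoidHom.mker θ × G => (p.1 : M) * ↑(s p.2)) := by
  constructor
  · rintro ⟨p, g⟩ ⟨p', g'⟩ h
    have hg : g = g' := by
      simpa [MonoidHom.mem_mker.mp p.2, MonoidHom.mem_mker.mp p'.2, hs] using congrArg θ h
    subst hg
    exact Prod.ext (Subtype.ext ((Units.mul_left_inj (s g)).mp h)) rfl
  · intro x
    refine ⟨⟨⟨x * ↑(s (θ x))⁻¹, ?_⟩, θ x⟩, ?_⟩
    · rw [MonoidHom.mem_mker, map_mul, ← map_inv, hs, mul_inv_cancel]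
    · simp only [mul_assoc, Units.inv_mul, mul_one]

theorem units_conj_eq_of_mclosure_eq_top {α : Type*} [MulAction G α] {S : Set G}
    (hS : Submonoid.closure S = ⊤) (s : G →* Mˣ) (F : α → M) {P : α → Prop}
    (hP : ∀ (g : G) x, P x → P (g • x))
    (hgen : ∀ t ∈ S, ∀ x, P x → ↑(s t) * F x * ↑(s t)⁻¹ = F (t • x)) (g : G) :
    ∀ x, P x → ↑(s g) * F x * ↑(s g)⁻¹ = F (g • x) := by
  induction (hS ▸ Submonoid.mem_top g : g ∈ Submonoid.closure S)
    using Submonoid.closure_induction with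
  | mem t ht => exact hgen t ht
  | one => intro x _; simp
  | mul g h _ _ ihg ihh =>
    intro x hx
    calc ↑(s (g * h)) * F x * ↑(s (g * h))⁻¹
        = ↑(s g) * (↑(s h) * F x * ↑(s h)⁻¹) * ↑(s g)⁻¹ := by simp [mul_assoc]
      _ = F ((g * h) • x) := by rw [ihh x hx, ihg _ (hP h x hx), mul_smul]

end SplitExtension

section Involution

variable {M : Type*} [Monoid M] {r : M} (hr : r * r = 1)

def conjInvolution : M →* M where
  toFun x := r * x * r
  map_one' := by rw [mul_one, hr]
  map_mul' x y := by
    rw [show r * x * r * (r * y * r) = r * x * (r * r) * y * r by simp only [mul_assoc], hr,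
      mul_one, mul_assoc r x y]

theorem conjInvolution_apply (x : M) : conjInvolution hr x = r * x * r := rfl

theorem conjInvolution_conjInvolution (x : M) : conjInvolution hr (conjInvolution hr x) = x := by
  simp only [conjInvolution_apply, mul_assoc, hr, mul_one]
  rw [← mul_assoc, hr, one_mul]

theorem conjInvolution_eq_self {x : M} (h : Commute r x) : conjInvolution hr x = x := by
  rw [conjInvolution_apply, h.eq, mul_assoc, hr, mul_one]

theorem conjInvolution_braid {s : M} (hs : s * s = 1) (h : r * s * r = s * r * s) (x : M) :
    conjInvolution hr (conjInvolution hs (conjInvolution hr x)) =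
      conjInvolution hs (conjInvolution hr (conjInvolution hs x)) :=
  calc r * (s * (r * x * r) * s) * r = (r * s * r) * x * (r * s * r) := by simp only [mul_assoc]
    _ = (s * r * s) * x * (s * r * s) := by rw [h]
    _ = s * (r * (s * x * s) * r) * s := by simp only [mul_assoc]

end Involution

section Relations

variable {n : ℕ}

def genN (c : Fin (n - 1) → SVBGen n) (k : ℕ) : SVB n :=
  if h : k < n - 1 then PresentedMonoid.of (SVBRel n) (c ⟨k, h⟩) else 1

theorem rhoN_eq_genN : rhoN (n := n) = genN .r := rfl

theorem tauN_eq_genN : tauN (n := n) = genN .t := rfl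

theorem sigN_true_eq_genN : sigN (n := n) true = genN .s := rfl

theorem sigN_false_eq_genN : sigN (n := n) false = genN .si := rfl

theorem genN_of_lt (c : Fin (n - 1) → SVBGen n) {k : ℕ} (h : k < n - 1) :
    genN c k = PresentedMonoid.of (SVBRel n) (c ⟨k, h⟩) :=
  dif_pos h

theorem commute_genN_of_far {c c' : Fin (n - 1) → SVBGen n} (hc : ∀ i, (c i).idx = i)
    (hc' : ∀ i, (c' i).idx = i) {k m : ℕ} (h : k + 2 ≤ m ∨ m + 2 ≤ k) :
    Commute (genN c k) (genN c' m) := by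
  unfold genN
  split_ifs with hk hm
  · have hrel := PresentedMonoid.mk_eq_mk_of_rel
      (SVBRel.comm (c ⟨k, hk⟩) (c' ⟨m, hm⟩) (by simpa [Far, hc, hc'] using h))
    rwa [map_mul, map_mul] at hrel
  all_goals simp

theorem rhoN_mul_self (k : ℕ) : rhoN (n := n) k * rhoN k = 1 := by
  rw [rhoN_eq_genN, genN]
  split_ifs with hk
  · have hrel := PresentedMonoid.mk_eq_mk_of_rel (SVBRel.rho_sq ⟨k, hk⟩)
    rwa [map_mul, map_one] at hrel
  · exact mul_one 1

theorem rhoN_braid {k : ℕ} (hk : k + 1 < n - 1) :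
    rhoN (n := n) k * rhoN (k + 1) * rhoN k = rhoN (k + 1) * rhoN k * rhoN (k + 1) := by
  have hrel := PresentedMonoid.mk_eq_mk_of_rel (SVBRel.braid_r ⟨k, by omega⟩ hk)
  simp only [map_mul] at hrel
  rwa [rhoN_eq_genN, genN_of_lt _ hk, genN_of_lt _ (by omega)]

theorem rhoN_mul_sigN_true_mul_rhoN {k : ℕ} (hk : k + 1 < n - 1) :
    rhoN (n := n) k * sigN true (k + 1) * rhoN k =
      rhoN (k + 1) * sigN true k * rhoN (k + 1) := by
  have hrel := PresentedMonoid.mk_eq_mk_of_rel (SVBRel.mixed_rs ⟨k, by omega⟩ hk)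
  simp only [map_mul] at hrel
  rwa [rhoN_eq_genN, sigN_true_eq_genN, genN_of_lt _ hk, genN_of_lt _ hk,
    genN_of_lt _ (by omega), genN_of_lt _ (by omega)]

theorem rhoN_mul_tauN_mul_rhoN {k : ℕ} (hk : k + 1 < n - 1) :
    rhoN (n := n) k * tauN (k + 1) * rhoN k = rhoN (k + 1) * tauN k * rhoN (k + 1) := by
  have hrel := PresentedMonoid.mk_eq_mk_of_rel (SVBRel.mixed_rt ⟨k, by omega⟩ hk)
  simp only [map_mul] at hrel
  rwa [rhoN_eq_genN, tauN_eq_genN, genN_of_lt _ hk, genN_of_lt _ hk,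
    genN_of_lt _ (by omega), genN_of_lt _ (by omega)]

theorem sigN_true_mul_sigN_false (k : ℕ) : sigN (n := n) true k * sigN false k = 1 := by
  rw [sigN_true_eq_genN, sigN_false_eq_genN, genN, genN]
  split_ifs with hk
  · have hrel := PresentedMonoid.mk_eq_mk_of_rel (SVBRel.inv_right ⟨k, hk⟩)
    rwa [map_mul, map_one] at hrel
  · exact mul_one 1

theorem sigN_false_mul_sigN_true (k : ℕ) : sigN (n := n) false k * sigN true k = 1 := by
  rw [sigN_true_eq_genN, sigN_false_eq_genN, genN, genN]
  split_ifs with hk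
  · have hrel := PresentedMonoid.mk_eq_mk_of_rel (SVBRel.inv_left ⟨k, hk⟩)
    rwa [map_mul, map_one] at hrel
  · exact mul_one 1

end Relations

section RhoConjugation

variable {n : ℕ}

def conjRho (k : ℕ) : SVB n →* SVB n := conjInvolution (rhoN_mul_self k)

theorem conjRho_apply (k : ℕ) (x : SVB n) : conjRho k x = rhoN k * x * rhoN k := rfl

theorem conjRho_conjRho (k : ℕ) (x : SVB n) : conjRho k (conjRho k x) = x :=
  conjInvolution_conjInvolution _ x

theorem conjRho_braid {k : ℕ} (hk : k + 1 < n - 1) (x : SVB n) :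
    conjRho k (conjRho (k + 1) (conjRho k x)) = conjRho (k + 1) (conjRho k (conjRho (k + 1) x)) :=
  conjInvolution_braid _ _ (rhoN_braid hk) x

structure RhoCompatible (g : ℕ → SVB n) : Prop where
  conjRho_of_far : ∀ k m, k + 2 ≤ m ∨ m + 2 ≤ k → conjRho k (g m) = g m
  conjRho_succ : ∀ k, k + 1 < n - 1 → conjRho k (g (k + 1)) = conjRho (k + 1) (g k)

theorem rhoCompatible_of_genN {c : Fin (n - 1) → SVBGen n} (hc : ∀ i, (c i).idx = i)
    (hsucc : ∀ k, k + 1 < n - 1 →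
      rhoN k * genN c (k + 1) * rhoN k = rhoN (k + 1) * genN c k * rhoN (k + 1)) :
    RhoCompatible (genN c) where
  conjRho_of_far _ _ h :=
    conjInvolution_eq_self _ (commute_genN_of_far (c := .r) (fun _ => rfl) hc h)
  conjRho_succ := hsucc

theorem rhoCompatible_rhoN : RhoCompatible (rhoN (n := n)) :=
  rhoCompatible_of_genN (fun _ => rfl) fun _ hk => rhoN_braid hk

theorem rhoCompatible_tauN : RhoCompatible (tauN (n := n)) :=
  rhoCompatible_of_genN (fun _ => rfl) fun _ hk => rhoN_mul_tauN_mul_rhoN hk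

theorem rhoCompatible_sigN_true : RhoCompatible (sigN (n := n) true) :=
  rhoCompatible_of_genN (fun _ => rfl) fun _ hk => rhoN_mul_sigN_true_mul_rhoN hk

theorem rhoCompatible_sigN (ε : Bool) : RhoCompatible (sigN (n := n) ε) := by
  cases ε
  · refine rhoCompatible_of_genN (fun _ => rfl) fun k hk => ?_
    -- `c_k σ_{k+1}⁻¹` and `c_{k+1} σ_k⁻¹` are inverses of the same element
    have hleft : conjRho k (sigN (n := n) false (k + 1)) * conjRho k (sigN true (k + 1)) = 1 := by
      rw [← map_mul, sigN_false_mul_sigN_true, map_one]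
    have hright : conjRho (k + 1) (sigN (n := n) true k) * conjRho (k + 1) (sigN false k) = 1 := by
      rw [← map_mul, sigN_true_mul_sigN_false, map_one]
    rw [rhoCompatible_sigN_true.conjRho_succ k hk] at hleft
    exact left_inv_eq_right_inv hleft hright
  · exact rhoCompatible_sigN_true

namespace RhoCompatible

variable {g : ℕ → SVB n} (hg : RhoCompatible g)
include hg

theorem conjRho_conjRho_succ {k : ℕ} (hk : k + 1 < n - 1) :
    conjRho k (conjRho (k + 1) (g k)) = g (k + 1) := by
  rw [← hg.conjRho_succ k hk, conjRho_conjRho]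

theorem conjRho_self : RhoCompatible (fun a => conjRho a (g a)) where
  conjRho_of_far k m h := by
    rw [conjRho_apply m, map_mul, map_mul, rhoCompatible_rhoN.conjRho_of_far k m h,
      hg.conjRho_of_far k m h]
  conjRho_succ k hk := by
    rw [conjRho_apply (k + 1), conjRho_apply k (g k), map_mul, map_mul, map_mul, map_mul,
      rhoCompatible_rhoN.conjRho_succ k hk, hg.conjRho_succ k hk]

end RhoCompatible

end RhoConjugation

section Chains

variable {n : ℕ}

theorem chain_eq_nil {a b : ℕ} (h : b ≤ a + 1) : chain n a b = [] := by
  rw [chain, show b - a - 1 = 0 by omega, List.range'_zero, List.map_nil]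

theorem chain_eq_append_cons {a b c : ℕ} (hab : a < b) (hbc : b < c) :
    chain n a c = chain n a b ++ rhoN b :: chain n b c := by
  have hsplit := List.range'_append (s := a + 1) (m := b - a - 1) (n := c - b) (step := 1)
  rw [show a + 1 + 1 * (b - a - 1) = b by omega, show b - a - 1 + (c - b) = c - a - 1 by omega,
    show c - b = c - b - 1 + 1 by omega, List.range'_succ] at hsplit
  rw [chain, chain, chain, ← hsplit, List.map_append, List.map_cons]

/-- `c_{b-1} (⋯ (c_{a+1} x))`, where `c_m = conjRho m`. -/
def conjChain (a b : ℕ) (x : SVB n) : SVB n :=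
  (chain n a b).reverse.prod * x * (chain n a b).prod

theorem conjChain_of_le {a b : ℕ} (h : b ≤ a + 1) (x : SVB n) : conjChain a b x = x := by
  simp [conjChain, chain_eq_nil h]

theorem conjChain_trans {a b c : ℕ} (hab : a < b) (hbc : b < c) (x : SVB n) :
    conjChain a c x = conjChain b c (conjRho b (conjChain a b x)) := by
  simp [conjChain, conjRho_apply, chain_eq_append_cons hab hbc, mul_assoc]

theorem conjChain_eq_conjChain_succ {a b : ℕ} (h : a + 1 < b) (x : SVB n) :
    conjChain a b x = conjChain (a + 1) b (conjRho (a + 1) x) := by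
  rw [conjChain_trans (Nat.lt_succ_self a) h, conjChain_of_le le_rfl]

theorem conjChain_succ {a b : ℕ} (h : a < b) (x : SVB n) :
    conjChain a (b + 1) x = conjRho b (conjChain a b x) := by
  rw [conjChain_trans h (Nat.lt_succ_self b), conjChain_of_le le_rfl]

theorem map_conjChain (f : SVB n →* SVB n) {a b : ℕ}
    (hf : ∀ m, a < m → m < b → f (rhoN m) = rhoN m) (x : SVB n) :
    f (conjChain a b x) = conjChain a b (f x) := by
  have hchain : (chain n a b).map f = chain n a b := by
    rw [chain, List.map_map]
    exact List.map_congr_left fun m hm => hf m (by simp at hm; omega) (by simp at hm; omega)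
  rw [conjChain, conjChain, map_mul, map_mul, map_list_prod, map_list_prod, List.map_reverse,
    hchain]

theorem conjRho_conjChain_of_far {k a b : ℕ} (h : ∀ m, a < m → m < b → k + 2 ≤ m ∨ m + 2 ≤ k)
    (x : SVB n) : conjRho k (conjChain a b x) = conjChain a b (conjRho k x) :=
  map_conjChain _ (fun m ha hb => rhoCompatible_rhoN.conjRho_of_far k m (h m ha hb)) x

/-- The braid relation lets `c_k` pass through `c_{k+1} c_k` inside the chain. -/
theorem conjRho_conjChain_eq_self {k a b : ℕ} (hak : a < k) (hkb : k + 2 ≤ b) (hb : b < n)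
    {x : SVB n} (hx : conjRho (k + 1) x = x) : conjRho k (conjChain a b x) = conjChain a b x := by
  have hz : conjRho (k + 1) (conjChain a k x) = conjChain a k x := by
    rw [conjRho_conjChain_of_far (fun m _ _ => by omega), hx]
  rw [conjChain_trans hak (by omega), conjChain_eq_conjChain_succ (by omega),
    conjRho_conjChain_of_far (fun m _ _ => by omega), conjRho_braid (by omega), hz]

end Chains

section PureGenerators

variable {n : ℕ}

open Equiv

/-- `X_{a,b}` built from the family `g`; `g = sigN ε` gives `X^ε` and `g = tauN` gives `Y`. -/
def pureGen (g : ℕ → SVB n) (a b : ℕ) : SVB n :=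
  if a < b then conjChain a b (conjRho a (g a)) else conjChain b a (g b)

namespace RhoCompatible

variable {g : ℕ → SVB n} (hg : RhoCompatible g)
include hg

-- `swap k (k + 1)` preserves `a < b` unless `(a, b) = (k, k + 1)`.
theorem conjRho_conjChain {k a b : ℕ} (hab : a < b) (hb : b < n) (hk : ¬(k = a ∧ b = a + 1)) :
    conjRho k (conjChain a b (g a)) =
      conjChain (swap k (k + 1) a) (swap k (k + 1) b) (g (swap k (k + 1) a)) := by
  rcases (show (k + 2 ≤ a ∨ b < k) ∨ k + 1 = a ∨ (k = a ∧ a + 2 ≤ b) ∨ (a < k ∧ k + 2 ≤ b) ∨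
      (a < k ∧ k + 1 = b) ∨ k = b by omega)
    with h | rfl | ⟨rfl, h⟩ | ⟨h, h'⟩ | ⟨h, rfl⟩ | rfl
  · rw [swap_apply_of_ne_of_ne (by omega) (by omega), swap_apply_of_ne_of_ne (by omega) (by omega),
      conjRho_conjChain_of_far (fun m _ _ => by omega), hg.conjRho_of_far k a (by omega)]
  · rw [swap_apply_right, swap_apply_of_ne_of_ne (by omega) (by omega),
      conjRho_conjChain_of_far (fun m _ _ => by omega), hg.conjRho_succ k (by omega),
      conjChain_eq_conjChain_succ (a := k) (by omega)]
  · rw [swap_apply_left, swap_apply_of_ne_of_ne (by omega) (by omega),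
      conjChain_eq_conjChain_succ (by omega), conjRho_conjChain_of_far (fun m _ _ => by omega),
      hg.conjRho_conjRho_succ (by omega)]
  · rw [swap_apply_of_ne_of_ne (by omega) (by omega), swap_apply_of_ne_of_ne (by omega) (by omega),
      conjRho_conjChain_eq_self h h' hb (hg.conjRho_of_far (k + 1) a (by omega))]
  · rw [swap_apply_of_ne_of_ne (by omega) (by omega), swap_apply_right, conjChain_succ h,
      conjRho_conjRho]
  · rw [swap_apply_of_ne_of_ne (by omega) (by omega), swap_apply_left, conjChain_succ hab]

theorem conjRho_pureGen {k a b : ℕ} (ha : a < n) (hb : b < n) (hab : a ≠ b) :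
    conjRho k (pureGen g a b) = pureGen g (swap k (k + 1) a) (swap k (k + 1) b) := by
  by_cases hflip : (a = k ∧ b = k + 1) ∨ (a = k + 1 ∧ b = k)
  · rcases hflip with ⟨rfl, rfl⟩ | ⟨rfl, rfl⟩ <;>
      simp [pureGen, conjChain_of_le, conjRho_conjRho]
  · rcases lt_or_gt_of_ne hab with h | h
    · have h' : swap k (k + 1) a < swap k (k + 1) b := by
        rw [swap_apply_def, swap_apply_def]; split_ifs <;> omega
      rw [pureGen, if_pos h, pureGen, if_pos h']
      exact hg.conjRho_self.conjRho_conjChain h hb (by omega)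
    · have h' : ¬swap k (k + 1) a < swap k (k + 1) b := by
        rw [swap_apply_def, swap_apply_def]; split_ifs <;> omega
      rw [pureGen, if_neg (by omega), pureGen, if_neg h']
      exact hg.conjRho_conjChain h ha (by omega)

end RhoCompatible

end PureGenerators

section Permutations

variable {n : ℕ}

theorem mclosure_range_swapAdj : Submonoid.closure (Set.range (swapAdj (n := n))) = ⊤ := by
  cases n with
  | zero => exact Subsingleton.elim _ _
  | succ m => exact Equiv.Perm.mclosure_swap_castSucc_succ m

theorem swapAdj_apply_val (k : Fin (n - 1)) (x : Fin n) :
    ((swapAdj k x : Fin n) : ℕ) = Equiv.swap (k : ℕ) (k + 1) x := by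
  simp only [swapAdj, Equiv.swap_apply_def, Fin.ext_iff, stA, stB]
  split_ifs <;> rfl

theorem sρ_eq_rhoN (k : Fin (n - 1)) : sρ k = rhoN (n := n) k := by
  simp [rhoN, k.isLt]

theorem Xe_eq_pureGen (i j : Fin n) (ε : Bool) : Xe i j ε = pureGen (sigN ε) i j := by
  simp only [Xe, pureGen, conjChain, conjRho_apply, mul_assoc]

theorem Ye_eq_pureGen (i j : Fin n) : Ye i j = pureGen tauN i j := by
  simp only [Ye, pureGen, conjChain, conjRho_apply, mul_assoc]

theorem apply_section_eq_self (θ : SVB n →* Equiv.Perm (Fin n))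
    (hθ : ∀ i : Fin (n - 1), θ (sρ i) = swapAdj i) (τsec : Equiv.Perm (Fin n) →* (SVB n)ˣ)
    (hτ : ∀ i : Fin (n - 1), ((τsec (swapAdj i) : (SVB n)ˣ) : SVB n) = sρ i)
    (π : Equiv.Perm (Fin n)) : θ (τsec π) = π :=
  DFunLike.congr_fun (MonoidHom.eq_of_eqOn_denseM mclosure_range_swapAdj
    (f := θ.comp ((Units.coeHom _).comp τsec)) (g := MonoidHom.id _)
    (by rintro _ ⟨k, rfl⟩; simp [hτ, hθ])) π

theorem RhoCompatible.units_conj_pureGen {g : ℕ → SVB n} (hg : RhoCompatible g)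
    (τsec : Equiv.Perm (Fin n) →* (SVB n)ˣ)
    (hτ : ∀ i : Fin (n - 1), ((τsec (swapAdj i) : (SVB n)ˣ) : SVB n) = sρ i)
    (π : Equiv.Perm (Fin n)) {i j : Fin n} (hij : i ≠ j) :
    ↑(τsec π) * pureGen g i j * ↑(τsec π)⁻¹ = pureGen g (π i) (π j) := by
  refine units_conj_eq_of_mclosure_eq_top mclosure_range_swapAdj τsec
    (fun x : Fin n × Fin n => pureGen g x.1 x.2) (P := fun x => x.1 ≠ x.2)
    (fun π x hx => π.injective.ne hx) ?_ π (i, j) hij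
  rintro _ ⟨k, rfl⟩ ⟨i, j⟩ hij
  have hinv : (τsec (swapAdj k))⁻¹ = τsec (swapAdj k) := by
    rw [← map_inv, swapAdj, Equiv.swap_inv]
  rw [hinv, hτ, sρ_eq_rhoN]
  simp only [Prod.smul_mk, Equiv.Perm.smul_def, swapAdj_apply_val]
  exact hg.conjRho_pureGen i.isLt j.isLt (Fin.val_ne_of_ne hij)

end Permutations

theorem SVB_semidirect_SVP_Sn_general (n : ℕ)
    (θ : SVB n →* Equiv.Perm (Fin n))
    (hθ : ∀ i : Fin (n - 1),
      θ (sσ i) = swapAdj i ∧ θ (sσi i) = swapAdj i ∧ θ (sρ i) = swapAdj i ∧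
        θ (sτ i) = swapAdj i)
    (τsec : Equiv.Perm (Fin n) →* (SVB n)ˣ)
    (hτ : ∀ i : Fin (n - 1), ((τsec (swapAdj i) : (SVB n)ˣ) : SVB n) = sρ i) :
    (∀ (π : Equiv.Perm (Fin n)) (i j : Fin n), i ≠ j → ∀ ε : Bool,
      ↑(τsec π) * Xe i j ε * ↑(τsec π)⁻¹ = Xe (π i) (π j) ε) ∧
    (∀ (π : Equiv.Perm (Fin n)) (i j : Fin n), i ≠ j →
      ↑(τsec π) * Ye i j * ↑(τsec π)⁻¹ = Ye (π i) (π j)) ∧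
    Function.Bijective
      (fun p : MonoidHom.mker θ × Equiv.Perm (Fin n) => (p.1 : SVB n) * ↑(τsec p.2)) := by
  refine ⟨fun π i j hij ε => ?_, fun π i j hij => ?_, ?_⟩
  · simpa only [Xe_eq_pureGen] using (rhoCompatible_sigN ε).units_conj_pureGen τsec hτ π hij
  · simpa only [Ye_eq_pureGen] using rhoCompatible_tauN.units_conj_pureGen τsec hτ π hij
  · exact bijective_mker_prod_mul_of_section θ τsec
      (apply_section_eq_self θ (fun i => (hθ i).2.2.1) τsec hτ)

/-- `SVB_n = SVP_n ⋊ S_n`: conjugation by the section `τ : S_n → SVB_n`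
permutes the pure generators by `π · X_{i,j} = X_{π(i),π(j)}`, `π · Y_{i,j} = Y_{π(i),π(j)}`,
and the multiplication map `SVP_n × S_n → SVB_n, (p, π) ↦ p·τ(π)` is a bijection. -/
theorem SVB_semidirect_SVP_Sn (n : ℕ) (hn : 2 ≤ n)
    (θ : SVB n →* Equiv.Perm (Fin n))
    (hθ : ∀ i : Fin (n - 1),
      θ (sσ i) = swapAdj i ∧ θ (sσi i) = swapAdj i ∧ θ (sρ i) = swapAdj i ∧
        θ (sτ i) = swapAdj i)
    (τsec : Equiv.Perm (Fin n) →* (SVB n)ˣ)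
    (hτ : ∀ i : Fin (n - 1), ((τsec (swapAdj i) : (SVB n)ˣ) : SVB n) = sρ i) :
    (∀ (π : Equiv.Perm (Fin n)) (i j : Fin n), i ≠ j → ∀ ε : Bool,
      ↑(τsec π) * Xe i j ε * ↑(τsec π)⁻¹ = Xe (π i) (π j) ε) ∧
    (∀ (π : Equiv.Perm (Fin n)) (i j : Fin n), i ≠ j →
      ↑(τsec π) * Ye i j * ↑(τsec π)⁻¹ = Ye (π i) (π j)) ∧
    Function.Bijective
      (fun p : MonoidHom.mker θ × Equiv.Perm (Fin n) => (p.1 : SVB n) * ↑(τsec p.2)) :=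
  SVB_semidirect_SVP_Sn_general n θ hθ τsec hτ

end SVBPaper
end
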